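/- arXiv:1409.5739 — 6 statements merged into one kernel-verified Lean document; each statement's English description precedes it below -/
import Mathlib

section
/- Let X be a real Banach space, let r > 0 and γ ≥ 0, and let E : X → ℝ ∪ {+∞} be a function which is finite and three times continuously Fréchet differentiable on the open ball B_r of radius r about 0, with E(0) = 0 and E(v) ≥ (γ/2)‖v‖² for all v ∈ X. Then for every ε > 0 there exists R > 0 such that for all u ∈ X with ‖u‖ ≤ R and all v ∈ X one has E(u+v) − E(u) − δE(u)[v] ≥ ((γ−ε)/2)‖v‖² (the inequality being interpreted in the extended reals, and holding trivially where E(u+v) = +∞). -/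
/-!
Since `e ≥ 0 = e 0` near `0`, the derivative of `e` vanishes at `0` and the first-order Taylor
remainder `e (u + v) - e u - δe(u)[v]` at `u = 0` is at least `γ/2 ‖v‖²`. For small `u` and `v`
the remainder at `u` differs from the remainder at `0` by at most `2η‖v‖²`, where `η` measures
how well `δe` is approximated near `0` by its (strict) derivative there: this is the mean value
inequality applied to `y ↦ e (u + y) - e y` on `[0, v]`. For `‖v‖ ≥ ρ` one uses the global
growth bound at `u + v` instead, and the error terms `e u`, `δe(u)[v]` and `‖u + v‖² - ‖v‖²`
are `o(1) · ‖v‖²` as `u → 0`.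
-/

open Metric Filter Topology
open scoped NNReal

theorem sq_norm_sub_two_mul_le_sq_norm_add {E : Type*} [SeminormedAddCommGroup E] (u v : E) :
    ‖v‖ ^ 2 - 2 * ‖u‖ * ‖v‖ ≤ ‖u + v‖ ^ 2 := by
  have h := norm_sub_le (u + v) u
  rw [add_sub_cancel_left] at h
  rcases le_total ‖v‖ ‖u‖ with huv | huv
  · nlinarith [norm_nonneg v, sq_nonneg ‖u + v‖]
  · nlinarith [norm_nonneg u]

section TaylorRemainder

variable {X F : Type*} [NormedAddCommGroup X] [NormedSpace ℝ X]
  [NormedAddCommGroup F] [NormedSpace ℝ F]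

theorem ApproximatesLinearOn.norm_remainder_sub_remainder_le {e : X → F} {f : X → X →L[ℝ] F}
    {L : X →L[ℝ] X →L[ℝ] F} {s : Set X} {η : ℝ≥0} (hL : ApproximatesLinearOn f L s η)
    (hs : Convex ℝ s) (he : ∀ x ∈ s, HasFDerivAt e (f x) x) {u v : X}
    (h0 : 0 ∈ s) (hu : u ∈ s) (hv : v ∈ s) (huv : u + v ∈ s) :
    ‖(e (u + v) - e u - f u v) - (e v - e 0 - f 0 v)‖ ≤ 2 * η * ‖v‖ ^ 2 := by
  set g : X → F := fun y => e (u + y) - e y - (f u - f 0) y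
  have hmem : ∀ y ∈ segment ℝ 0 v, y ∈ s ∧ u + y ∈ s ∧ ‖y‖ ≤ ‖v‖ := by
    rw [segment_eq_image']
    rintro _ ⟨t, ht, rfl⟩
    simp only [zero_add, sub_zero]
    refine ⟨by simpa using hs.add_smul_mem h0 (by simpa using hv) ht, hs.add_smul_mem hu huv ht, ?_⟩
    rw [norm_smul, Real.norm_of_nonneg ht.1]
    exact mul_le_of_le_one_left (norm_nonneg v) ht.2
  have hg : ∀ y ∈ segment ℝ 0 v,
      HasFDerivWithinAt g (f (u + y) - f y - (f u - f 0)) (segment ℝ 0 v) y := by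
    intro y hy
    obtain ⟨hys, huys, -⟩ := hmem y hy
    have := (((hasFDerivAt_comp_add_left u).2 (he _ huys)).sub (he y hys)).sub
      (f u - f 0).hasFDerivAt
    exact this.hasFDerivWithinAt
  have hbound : ∀ y ∈ segment ℝ 0 v, ‖f (u + y) - f y - (f u - f 0)‖ ≤ 2 * η * ‖v‖ := by
    intro y hy
    obtain ⟨hys, huys, hyv⟩ := hmem y hy
    have h₁ := hL (u + y) huys u hu
    have h₂ := hL y hys 0 h0
    rw [add_sub_cancel_left] at h₁
    rw [sub_zero] at h₂
    calc ‖f (u + y) - f y - (f u - f 0)‖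
        = ‖(f (u + y) - f u - L y) - (f y - f 0 - L y)‖ := by congr 1; abel
      _ ≤ η * ‖y‖ + η * ‖y‖ := (norm_sub_le _ _).trans (add_le_add h₁ h₂)
      _ ≤ 2 * η * ‖v‖ := by nlinarith [η.coe_nonneg]
  have := (convex_segment (0 : X) v).norm_image_sub_le_of_norm_hasFDerivWithin_le hg hbound
    (left_mem_segment ℝ 0 v) (right_mem_segment ℝ 0 v)
  calc ‖(e (u + v) - e u - f u v) - (e v - e 0 - f 0 v)‖ = ‖g v - g 0‖ := by
        simp only [g, add_zero, map_zero, sub_zero, sub_apply]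
        congr 1
        abel
    _ ≤ 2 * η * ‖v‖ * ‖v - 0‖ := this
    _ = 2 * η * ‖v‖ ^ 2 := by rw [sub_zero]; ring

theorem HasStrictFDerivAt.exists_sq_mul_le_remainder {e : X → ℝ} {f : X → X →L[ℝ] ℝ}
    {L : X →L[ℝ] X →L[ℝ] ℝ} {γ : ℝ} (hL : HasStrictFDerivAt f L 0)
    (he : ∀ᶠ x in 𝓝 0, HasFDerivAt e (f x) x)
    (hγ : ∀ᶠ v in 𝓝 0, γ / 2 * ‖v‖ ^ 2 ≤ e v - e 0 - f 0 v) {ε : ℝ} (hε : 0 < ε) :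
    ∃ δ > 0, ∀ u v : X, ‖u‖ < δ → ‖v‖ < δ →
      (γ - ε) / 2 * ‖v‖ ^ 2 ≤ e (u + v) - e u - f u v := by
  obtain ⟨η, hη⟩ : ∃ η : ℝ≥0, (η : ℝ) = ε / 4 := ⟨⟨ε / 4, by positivity⟩, rfl⟩
  obtain ⟨s, hs, hLs⟩ := hL.approximates_deriv_on_nhds (c := η)
    (Or.inr (by rw [← NNReal.coe_pos, hη]; positivity))
  obtain ⟨δ, hδ, hball⟩ := Metric.eventually_nhds_iff_ball.1 ((he.and hγ).and hs)
  refine ⟨δ / 2, half_pos hδ, fun u v hu hv => ?_⟩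
  have hmem : ∀ x : X, ‖x‖ < δ → x ∈ ball (0 : X) δ := fun x hx => mem_ball_zero_iff.2 hx
  have huv : ‖u + v‖ < δ := (norm_add_le u v).trans_lt (by linarith)
  have key := (hLs.mono_set fun x hx => (hball x hx).2).norm_remainder_sub_remainder_le
    (convex_ball 0 δ) (fun x hx => (hball x hx).1.1) (mem_ball_self hδ) (hmem u (by linarith))
    (hmem v (by linarith)) (hmem _ huv)
  have hv₀ := (hball v (hmem v (by linarith))).1.2
  rw [hη, Real.norm_eq_abs, abs_le] at key
  linarith [key.1]

theorem eventually_sq_mul_le_of_le_norm {e : X → ℝ} {f : X → X →L[ℝ] ℝ}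
    (he : Tendsto e (𝓝 0) (𝓝 0)) (hf : Tendsto f (𝓝 0) (𝓝 0)) {γ ε ρ : ℝ} (hγ : 0 ≤ γ)
    (hε : 0 < ε) (hρ : 0 < ρ) :
    ∀ᶠ u in 𝓝 0, ∀ v : X, ρ ≤ ‖v‖ →
      (γ - ε) / 2 * ‖v‖ ^ 2 ≤ γ / 2 * ‖u + v‖ ^ 2 - e u - f u v := by
  have he' : Tendsto (fun u => |e u|) (𝓝 0) (𝓝 0) := by simpa using he.abs
  have hf' : Tendsto (fun u => γ * ‖u‖ + ‖f u‖) (𝓝 0) (𝓝 0) := by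
    simpa using (tendsto_norm_zero.const_mul γ).add hf.norm
  filter_upwards [he'.eventually (eventually_le_nhds (show 0 < ε / 4 * ρ ^ 2 by positivity)),
    hf'.eventually (eventually_le_nhds (show 0 < ε / 4 * ρ by positivity))] with u heu hfu v hv
  have hsq := mul_le_mul_of_nonneg_left (sq_norm_sub_two_mul_le_sq_norm_add u v) hγ
  have hfuv : f u v ≤ ‖f u‖ * ‖v‖ := (le_abs_self _).trans ((f u).le_opNorm v)
  have hρv : ρ * ‖v‖ ≤ ‖v‖ ^ 2 := by nlinarith
  have hρ2 : ρ ^ 2 ≤ ‖v‖ ^ 2 := pow_le_pow_left₀ hρ.le hv 2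
  nlinarith [le_abs_self (e u), norm_nonneg v]

end TaylorRemainder

theorem EReal.coe_le_sub_sub_of_le {x : EReal} {a b c d : ℝ} (hx : (a : EReal) ≤ x)
    (h : d ≤ a - b - c) : (d : EReal) ≤ x - b - c :=
  calc (d : EReal) ≤ ((a - b - c : ℝ) : EReal) := EReal.coe_le_coe_iff.2 h
    _ = (a : EReal) - b - c := by rw [EReal.coe_sub, EReal.coe_sub]
    _ ≤ x - b - c := EReal.sub_le_sub (EReal.sub_le_sub hx le_rfl) le_rfl

/-- `e` is the finite, `C³` representative of `E` on the ball, so `δE(u)` is `fderiv ℝ e u`;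
the growth bound excludes the value `-∞` of `E`. -/
theorem stmt_0_general (X : Type*) [NormedAddCommGroup X] [NormedSpace ℝ X]
    (r γ : ℝ) (hr : 0 < r) (hγ : 0 ≤ γ)
    (E : X → EReal) (e : X → ℝ)
    (hEe : ∀ x ∈ Metric.ball (0 : X) r, E x = (e x : EReal))
    (he : ContDiffOn ℝ 3 e (Metric.ball (0 : X) r))
    (hE0 : E 0 = 0)
    (hgrowth : ∀ v : X, ((γ / 2 * ‖v‖ ^ 2 : ℝ) : EReal) ≤ E v) :
    ∀ ε : ℝ, 0 < ε → ∃ R : ℝ, 0 < R ∧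
      ∀ u : X, ‖u‖ ≤ R → ∀ v : X,
        (((γ - ε) / 2 * ‖v‖ ^ 2 : ℝ) : EReal) ≤
          E (u + v) - E u - ((fderiv ℝ e u v : ℝ) : EReal) := by
  have hball : ball (0 : X) r ∈ 𝓝 0 := ball_mem_nhds 0 hr
  have hderiv : ∀ᶠ x in 𝓝 (0 : X), HasFDerivAt e (fderiv ℝ e x) x :=
    eventually_of_mem hball fun x hx =>
      ((he.contDiffAt (isOpen_ball.mem_nhds hx)).differentiableAt (by norm_num)).hasFDerivAt
  have hstrict : HasStrictFDerivAt (fderiv ℝ e) (fderiv ℝ (fderiv ℝ e) 0) 0 :=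
    ((he.fderiv_of_isOpen isOpen_ball (m := 1) (by norm_num)).contDiffAt hball).hasStrictFDerivAt
      one_ne_zero
  have he0 : e 0 = 0 := by exact_mod_cast (hEe 0 (mem_ball_self hr)).symm.trans hE0
  have hgrowth' : ∀ᶠ v in 𝓝 (0 : X), γ / 2 * ‖v‖ ^ 2 ≤ e v :=
    eventually_of_mem hball fun v hv => by exact_mod_cast (hEe v hv) ▸ hgrowth v
  have hf0 : fderiv ℝ e 0 = 0 := by
    refine IsLocalMin.hasFDerivAt_eq_zero ?_ hderiv.self_of_nhds
    filter_upwards [hgrowth'] with v hv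
    rw [he0]
    exact (by positivity : 0 ≤ γ / 2 * ‖v‖ ^ 2).trans hv
  intro ε hε
  obtain ⟨δ, hδ, hnear⟩ := hstrict.exists_sq_mul_le_remainder hderiv
    (by simpa [he0, hf0] using hgrowth') hε
  have hρ : 0 < min δ r / 2 := by positivity
  have hfar := eventually_sq_mul_le_of_le_norm (he0 ▸ (he.continuousOn.continuousAt hball).tendsto)
    (hf0 ▸ hstrict.continuousAt.tendsto) hγ hε hρ
  obtain ⟨R, hR, hsmall⟩ := Metric.eventually_nhds_iff_ball.1
    (hfar.and (inter_mem (ball_mem_nhds 0 hρ) hball))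
  refine ⟨R / 2, half_pos hR, fun u hu v => ?_⟩
  obtain ⟨hfar_u, hu_ρ, hu_r⟩ := hsmall u (mem_ball_zero_iff.2 (by linarith))
  rw [mem_ball_zero_iff] at hu_ρ
  rw [hEe u hu_r]
  rcases le_or_gt (min δ r / 2) ‖v‖ with hv | hv
  · exact EReal.coe_le_sub_sub_of_le (hgrowth _) (hfar_u v hv)
  · have huv : u + v ∈ ball (0 : X) r :=
      mem_ball_zero_iff.2 ((norm_add_le u v).trans_lt (by linarith [min_le_right δ r]))
    exact EReal.coe_le_sub_sub_of_le (hEe _ huv).ge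
      (hnear u v (by linarith [min_le_left δ r]) (by linarith [min_le_left δ r]))

/-- uniform quadratic growth near the minimum for an extended-real-valued
energy on a Banach space.  `E : X → EReal` takes values in `ℝ ∪ {+∞}` (the value `-∞`
is excluded by the growth hypothesis); `e` is the finite, `C³` representative of `E`
on the open ball of radius `r` about `0`, so that the Fréchet derivative of `E` at an
interior point `u` is `fderiv ℝ e u`. -/
theorem stmt_0 (X : Type*) [NormedAddCommGroup X] [NormedSpace ℝ X] [CompleteSpace X]
    (r γ : ℝ) (hr : 0 < r) (hγ : 0 ≤ γ)
    (E : X → EReal) (e : X → ℝ)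
    (hEe : ∀ x ∈ Metric.ball (0 : X) r, E x = (e x : EReal))
    (he : ContDiffOn ℝ 3 e (Metric.ball (0 : X) r))
    (hE0 : E 0 = 0)
    (hgrowth : ∀ v : X, ((γ / 2 * ‖v‖ ^ 2 : ℝ) : EReal) ≤ E v) :
    ∀ ε : ℝ, 0 < ε → ∃ R : ℝ, 0 < R ∧
      ∀ u : X, ‖u‖ ≤ R → ∀ v : X,
        (((γ - ε) / 2 * ‖v‖ ^ 2 : ℝ) : EReal) ≤
          E (u + v) - E u - ((fderiv ℝ e u v : ℝ) : EReal) :=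
  stmt_0_general X r γ hr hγ E e hEe he hE0 hgrowth
end

section
/- Let α₀, α₁ ∈ ℝ with α₀ > |α₁|. Then ∫₀¹ log(α₀ + α₁ cos(2πξ)) dξ = log((α₀ + √(α₀² − α₁²))/2), where log is the real natural logarithm. -/
/-!
With `c = (α₀ + √(α₀² - α₁²)) / 2` and `r = α₁ / (2c)` one has `|r| < 1` and
`α₀ + α₁ cos θ = c · |e^{iθ} + r|²`. The mean of `log |z + r|` over the unit circle is
`log⁺ |r| = 0` (the mean value property of the harmonic function `log |z + r|`), so the mean of
`log (α₀ + α₁ cos θ)` is `log c`.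
-/

open Real MeasureTheory Metric

theorem Complex.norm_add_ofReal_sq_of_norm_eq_one {z : ℂ} (hz : ‖z‖ = 1) (r : ℝ) :
    ‖z + r‖ ^ 2 = 1 + 2 * r * z.re + r ^ 2 := by
  rw [← Complex.normSq_eq_norm_sq, Complex.normSq_add, Complex.normSq_eq_norm_sq, hz,
    Complex.normSq_ofReal]
  simp only [Complex.conj_ofReal, Complex.re_mul_ofReal]
  ring

theorem circleAverage_log_mul_one_add_sq_add_mul_re {c r : ℝ} (hc : 0 < c) (hr : |r| < 1) :
    circleAverage (fun z ↦ log (c * (1 + r ^ 2) + 2 * c * r * z.re)) 0 1 = log c := by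
  have hfactor : Set.EqOn (fun z : ℂ ↦ log (c * (1 + r ^ 2) + 2 * c * r * z.re))
      (fun z ↦ log c + 2 * log ‖z + r‖) (sphere 0 |1|) := by
    intro z hz
    rw [abs_one, mem_sphere_zero_iff_norm] at hz
    have hzr : 0 < ‖z + r‖ := by
      have := norm_sub_norm_le z (-r)
      rw [sub_neg_eq_add, norm_neg, Complex.norm_real, norm_eq_abs, hz] at this
      linarith
    have : c * (1 + r ^ 2) + 2 * c * r * z.re = c * ‖z + r‖ ^ 2 := by
      rw [Complex.norm_add_ofReal_sq_of_norm_eq_one hz]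
      ring
    dsimp only
    rw [this, log_mul hc.ne' (by positivity), log_pow, Nat.cast_ofNat]
  have hint : CircleIntegrable (fun z : ℂ ↦ 2 * log ‖z + r‖) 0 1 :=
    (by simpa using circleIntegrable_log_norm_sub_const (a := -r) (c := 0) 1 :
      CircleIntegrable (log ‖· + r‖) 0 1).const_smul (a := (2 : ℝ))
  calc circleAverage (fun z ↦ log (c * (1 + r ^ 2) + 2 * c * r * z.re)) 0 1
      = circleAverage (fun z ↦ log c + 2 * log ‖z + r‖) 0 1 := circleAverage_congr_sphere hfactor
    _ = log c + (2 : ℝ) • circleAverage (log ‖· + r‖) 0 1 := by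
      rw [circleAverage_fun_add (circleIntegrable_const _ _ _) hint, circleAverage_const,
        ← circleAverage_fun_smul]
      rfl
    _ = log c := by simp [posLog_eq_zero_iff, hr.le]

theorem circleAverage_log_add_mul_re {α₀ α₁ : ℝ} (h : |α₁| < α₀) :
    circleAverage (fun z ↦ log (α₀ + α₁ * z.re)) 0 1 =
      log ((α₀ + √(α₀ ^ 2 - α₁ ^ 2)) / 2) := by
  have hs : √(α₀ ^ 2 - α₁ ^ 2) ^ 2 = α₀ ^ 2 - α₁ ^ 2 :=
    sq_sqrt (by nlinarith [abs_nonneg α₁, sq_abs α₁])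
  obtain ⟨c, hc_def⟩ : ∃ c, c = (α₀ + √(α₀ ^ 2 - α₁ ^ 2)) / 2 := ⟨_, rfl⟩
  have hc : 0 < c := by
    rw [hc_def]
    have := (abs_nonneg α₁).trans_lt h
    positivity
  have hα₁ : |α₁| < 2 * c := by
    have := sqrt_nonneg (α₀ ^ 2 - α₁ ^ 2)
    linarith
  have hroot : 4 * c ^ 2 - 4 * α₀ * c + α₁ ^ 2 = 0 := by
    rw [hc_def]
    linear_combination hs
  obtain ⟨r, hr_def⟩ : ∃ r, r = α₁ / (2 * c) := ⟨_, rfl⟩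
  have hr : |r| < 1 := by
    rwa [hr_def, abs_div, abs_of_pos (by positivity : 0 < 2 * c), div_lt_one (by positivity)]
  have h₀ : α₀ = c * (1 + r ^ 2) := by
    rw [hr_def]
    field_simp
    linear_combination -hroot
  have h₁ : α₁ = 2 * c * r := by
    rw [hr_def]
    field_simp
  rw [← hc_def, ← circleAverage_log_mul_one_add_sq_add_mul_re hc hr, h₀, h₁]

/-- value of the logarithmic integral. -/
theorem stmt_5 (α₀ α₁ : ℝ) (h : |α₁| < α₀) :
    ∫ ξ in (0:ℝ)..1, Real.log (α₀ + α₁ * Real.cos (2 * Real.pi * ξ)) =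
      Real.log ((α₀ + Real.sqrt (α₀ ^ 2 - α₁ ^ 2)) / 2) := by
  rw [← circleAverage_log_add_mul_re h, circleAverage_def,
    intervalIntegral.integral_comp_mul_left (fun θ ↦ log (α₀ + α₁ * cos θ)) (by positivity)]
  simp [circleMap]
end

section
/- Let N ≥ 1 be an integer, let α ∈ (−1,1) with α ≠ 0, and set κ := √(1−α²) and λ := −(1−κ)/α (so that |λ| < 1 and λ ≠ 0). Let H be the real (2N+1)×(2N+1) symmetric tridiagonal matrix with rows and columns indexed by i ∈ {−N,…,N}, with diagonal entries H_{ii} = 2 for |i| < N and H_{NN} = H_{−N,−N} = 1, off-diagonal entries H_{ij} = α for |i−j| = 1, and H_{ij} = 0 for |i−j| > 1. Define the matrix M by M_{ij} = λ^{−i−j}(λ^{2i} + λ^{2N})(λ^{2(j+N)} + 1)/(2κ(1−λ^{4N})) for j ≤ i, and M_{ij} = λ^{−i−j}(λ^{2j} + λ^{2N})(λ^{2(i+N)} + 1)/(2κ(1−λ^{4N})) for j > i. Then H is invertible and M = H⁻¹ (i.e., H·M equals the identity matrix). -/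
/-!
`H` is a symmetric Jacobi matrix and `M` is its discrete Green's function
`u (min i j) * v (max i j)`, built from two solutions of the three-term recurrence
`α x (m - 1) + 2 x m + α x (m + 1) = 0`. Since `λ` is a root of `α λ² + 2 λ + α = 0`, both `λ ^ m`
and `λ ^ (-m)` solve it. The even combination `λ ^ m + λ ^ (-m)` satisfies the free boundary
condition at the left end and its mirror image the one at the right end, so off the diagonal every
row of `H * M` vanishes. On the diagonal the row reduces to `α` times the (constant) Wronskian of
the two solutions, which the normalising factor `2 κ (1 - λ ^ (4 N))` turns into `1`.
-/

open Finset

theorem Fin.sum_ite_val_eq {R : Type*} [AddCommMonoid R] {n : ℕ} (c : ℤ) (x : R) :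
    ∑ k : Fin n, (if (k : ℤ) = c then x else 0) = if 0 ≤ c ∧ c < n then x else 0 := by
  split_ifs with hc
  · lift c to ℕ using hc.1
    have hcn : c < n := by omega
    rw [sum_eq_single ⟨c, hcn⟩ (fun k _ hk => if_neg fun h => hk (Fin.ext (by exact_mod_cast h)))
      (fun h => absurd (mem_univ _) h), if_pos rfl]
  · exact sum_eq_zero fun k _ => if_neg (by omega)

namespace Matrix

variable {R : Type*} [CommRing R] {n : ℕ}

def IsTridiagonal (H : Matrix (Fin n) (Fin n) R) : Prop :=
  ∀ i k : Fin n, 1 < ((i : ℤ) - k).natAbs → H i k = 0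

def greenMatrix (u v : Fin n → R) : Matrix (Fin n) (Fin n) R :=
  of fun i j => if j ≤ i then u j * v i else u i * v j

theorem IsTridiagonal.sum_mul_eq_mulVec {H : Matrix (Fin n) (Fin n) R} (hH : H.IsTridiagonal)
    (i : Fin n) {f g : Fin n → R} (hfg : ∀ k : Fin n, ((i : ℤ) - k).natAbs ≤ 1 → f k = g k) :
    ∑ k, H i k * f k = (H *ᵥ g) i := by
  rw [mulVec, dotProduct]
  refine sum_congr rfl fun k _ => ?_
  by_cases hk : ((i : ℤ) - k).natAbs ≤ 1
  · rw [hfg k hk]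
  · rw [hH i k (by omega), zero_mul, zero_mul]

section Green

variable {H : Matrix (Fin n) (Fin n) R} {u v : Fin n → R} {i j : Fin n}

theorem mul_greenMatrix_apply_of_lt (hH : H.IsTridiagonal) (hij : i < j) (hu : (H *ᵥ u) i = 0) :
    (H * greenMatrix u v) i j = 0 := by
  rw [Fin.lt_def] at hij
  rw [mul_apply, hH.sum_mul_eq_mulVec i (g := v j • u), mulVec_smul, Pi.smul_apply, hu,
    smul_zero]
  intro k hk
  rw [greenMatrix, of_apply, Pi.smul_apply, smul_eq_mul, mul_comm (v j)]
  split_ifs with hjk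
  · rw [Fin.le_antisymm hjk (Fin.le_def.2 (by omega))]
  · rfl

theorem mul_greenMatrix_apply_of_gt (hH : H.IsTridiagonal) (hij : j < i) (hv : (H *ᵥ v) i = 0) :
    (H * greenMatrix u v) i j = 0 := by
  rw [Fin.lt_def] at hij
  rw [mul_apply, hH.sum_mul_eq_mulVec i (g := u j • v), mulVec_smul, Pi.smul_apply, hv,
    smul_zero]
  intro k hk
  rw [greenMatrix, of_apply, if_pos (Fin.le_def.2 (by omega)), Pi.smul_apply, smul_eq_mul]

-- On the diagonal only the neighbour across the diagonal sees the other branch of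
-- `greenMatrix`; its contribution is the Wronskian.
theorem mul_greenMatrix_apply_self_of_succ (hH : H.IsTridiagonal) {k : Fin n}
    (hk : (k : ℕ) = i + 1) (hu : (H *ᵥ u) i = 0) (hW : H i k * (u i * v k - u k * v i) = 1) :
    (H * greenMatrix u v) i i = 1 := by
  rw [mul_apply, hH.sum_mul_eq_mulVec i (g := v i • u + Pi.single k (u i * v k - u k * v i)),
    mulVec_add, mulVec_smul, mulVec_single]
  · simp only [Pi.add_apply, Pi.smul_apply, smul_eq_mul, col_apply,
      MulOpposite.smul_eq_mul_unop, MulOpposite.unop_op]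
    rw [hu, mul_zero, zero_add, hW]
  · intro k' hk'
    simp only [greenMatrix, of_apply, Pi.add_apply, Pi.smul_apply, smul_eq_mul, Pi.single_apply]
    obtain hk'i | rfl | rfl : (k' : ℕ) < i ∨ k' = i ∨ k' = k := by
      simp only [Fin.ext_iff]; omega
    · rw [if_neg (by rw [Fin.le_def]; omega), if_neg (by rw [Fin.ext_iff]; omega)]
      ring
    · rw [if_pos le_rfl, if_neg (by rw [Fin.ext_iff]; omega)]
      ring
    · rw [if_pos (by rw [Fin.le_def]; omega), if_pos rfl]
      ring

theorem mul_greenMatrix_apply_self_of_pred (hH : H.IsTridiagonal) {k : Fin n}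
    (hk : (i : ℕ) = k + 1) (hv : (H *ᵥ v) i = 0) (hW : H i k * (u k * v i - u i * v k) = 1) :
    (H * greenMatrix u v) i i = 1 := by
  rw [mul_apply, hH.sum_mul_eq_mulVec i (g := u i • v + Pi.single k (u k * v i - u i * v k)),
    mulVec_add, mulVec_smul, mulVec_single]
  · simp only [Pi.add_apply, Pi.smul_apply, smul_eq_mul, col_apply,
      MulOpposite.smul_eq_mul_unop, MulOpposite.unop_op]
    rw [hv, mul_zero, zero_add, hW]
  · intro k' hk'
    simp only [greenMatrix, of_apply, Pi.add_apply, Pi.smul_apply, smul_eq_mul, Pi.single_apply]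
    obtain hik' | rfl | rfl : (i : ℕ) < k' ∨ k' = i ∨ k' = k := by
      simp only [Fin.ext_iff]; omega
    · rw [if_pos (by rw [Fin.le_def]; omega), if_neg (by rw [Fin.ext_iff]; omega)]
      ring
    · rw [if_pos le_rfl, if_neg (by rw [Fin.ext_iff]; omega)]
      ring
    · rw [if_neg (by rw [Fin.le_def]; omega), if_pos rfl]
      ring

end Green

theorem mul_greenMatrix_eq_one {H : Matrix (Fin n) (Fin n) R} (hn : 1 < n)
    (hH : H.IsTridiagonal) (hsymm : H.IsSymm) {u v : Fin n → R}
    (hu : ∀ i : Fin n, (i : ℕ) + 1 < n → (H *ᵥ u) i = 0)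
    (hv : ∀ i : Fin n, 0 < (i : ℕ) → (H *ᵥ v) i = 0)
    (hW : ∀ i k : Fin n, (k : ℕ) = i + 1 → H i k * (u i * v k - u k * v i) = 1) :
    H * greenMatrix u v = 1 := by
  ext i j
  rcases lt_trichotomy i j with hij | rfl | hij
  · rw [mul_greenMatrix_apply_of_lt hH hij (hu i (by rw [Fin.lt_def] at hij; omega)),
      one_apply_ne hij.ne]
  · rw [one_apply_eq]
    by_cases hi : (i : ℕ) + 1 < n
    · exact mul_greenMatrix_apply_self_of_succ hH (k := ⟨i + 1, hi⟩) rfl (hu i hi) (hW _ _ rfl)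
    · have hk : (i : ℕ) = (i - 1 : ℕ) + 1 := by omega
      exact mul_greenMatrix_apply_self_of_pred hH (k := ⟨i - 1, by omega⟩) hk (hv i (by omega))
        (hsymm.apply _ _ ▸ hW _ _ hk)
  · rw [mul_greenMatrix_apply_of_gt hH hij (hv i (by rw [Fin.lt_def] at hij; omega)),
      one_apply_ne hij.ne']

end Matrix


noncomputable def symPow (l : ℝ) (m : ℤ) : ℝ := l ^ m + l ^ (-m)

section SymPow

variable {l : ℝ}

theorem symPow_neg (m : ℤ) : symPow l (-m) = symPow l m := by
  rw [symPow, symPow, neg_neg, add_comm]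

theorem symPow_recurrence {α : ℝ} (hl : l ≠ 0) (hquad : α * l ^ 2 + 2 * l + α = 0) (m : ℤ) :
    α * symPow l (m - 1) + 2 * symPow l m + α * symPow l (m + 1) = 0 := by
  have hm : l ^ m ≠ 0 := zpow_ne_zero m hl
  simp only [symPow, neg_sub, neg_add, zpow_sub₀ hl, zpow_add₀ hl, zpow_neg, zpow_one]
  field_simp
  linear_combination (l ^ m * l ^ m + 1) * hquad

theorem symPow_wronskian (hl : l ≠ 0) (k p : ℤ) :
    symPow l k * symPow l (k + 1 - p) - symPow l (k + 1) * symPow l (k - p) =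
      (l⁻¹ - l) * (l ^ p - l ^ (-p)) := by
  have hk : l ^ k ≠ 0 := zpow_ne_zero k hl
  have hp : l ^ p ≠ 0 := zpow_ne_zero p hl
  simp only [symPow, neg_sub, neg_add, zpow_sub₀ hl, zpow_add₀ hl, zpow_neg, zpow_one]
  field_simp
  ring

theorem zpow_neg_add_mul_eq_mul_symPow (hl : l ≠ 0) (a b p : ℤ) :
    l ^ (-(a + b)) * (l ^ (2 * a) + l ^ (2 * p)) * (l ^ (2 * (b + p)) + 1) =
      l ^ (2 * p) * symPow l (b + p) * symPow l (a - p) := by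
  have ha : l ^ a ≠ 0 := zpow_ne_zero a hl
  have hb : l ^ b ≠ 0 := zpow_ne_zero b hl
  have hp : l ^ p ≠ 0 := zpow_ne_zero p hl
  simp only [symPow, two_mul, neg_sub, neg_add, zpow_sub₀ hl, zpow_add₀ hl, zpow_neg]
  field_simp

end SymPow

section Parameters

variable {α κ l : ℝ}

theorem lam_ne_zero (hα0 : α ≠ 0) (hκ : κ ^ 2 = 1 - α ^ 2) (hl : l = -(1 - κ) / α) : l ≠ 0 := by
  rw [hl]
  refine div_ne_zero (neg_ne_zero.2 (sub_ne_zero.2 fun h => hα0 ?_)) hα0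
  subst h
  nlinarith

theorem lam_quadratic (hα0 : α ≠ 0) (hκ : κ ^ 2 = 1 - α ^ 2) (hl : l = -(1 - κ) / α) :
    α * l ^ 2 + 2 * l + α = 0 := by
  subst hl
  field_simp
  linear_combination hκ

theorem lam_wronskian (hα0 : α ≠ 0) (hκ : κ ^ 2 = 1 - α ^ 2) (hl : l = -(1 - κ) / α) :
    α * (l⁻¹ - l) = -2 * κ := by
  have hκ1 : 1 - κ ≠ 0 := fun h => lam_ne_zero hα0 hκ hl (by rw [hl, h, neg_zero, zero_div])
  subst hl
  field_simp
  linear_combination (-1) * hκ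

theorem lam_sq_lt_one (hα0 : α ≠ 0) (hκpos : 0 < κ) (hκ : κ ^ 2 = 1 - α ^ 2)
    (hl : l = -(1 - κ) / α) : l ^ 2 < 1 := by
  subst hl
  have hα2 : 0 < α ^ 2 := by positivity
  have hκ1 : κ < 1 := by nlinarith
  rw [div_pow, neg_sq, div_lt_one hα2]
  nlinarith

end Parameters

section Solutions

variable {α κ l : ℝ} {N : ℕ}

-- Indexed by `m = i + N`, so that the chain is `0 ≤ m ≤ 2 * N`: `leftSolution` is even about `0`
-- and `rightSolution` about `2 * N`.
noncomputable def leftSolution (κ l : ℝ) (N : ℕ) (m : ℤ) : ℝ :=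
  symPow l m / (2 * κ * (1 - l ^ (4 * N)))

noncomputable def rightSolution (l : ℝ) (N : ℕ) (m : ℤ) : ℝ :=
  l ^ (2 * (N : ℤ)) * symPow l (m - 2 * N)

theorem leftSolution_recurrence (hα0 : α ≠ 0) (hκ : κ ^ 2 = 1 - α ^ 2) (hl : l = -(1 - κ) / α)
    (m : ℤ) :
    α * leftSolution κ l N (m - 1) + 2 * leftSolution κ l N m +
      α * leftSolution κ l N (m + 1) = 0 := by
  simp only [leftSolution]
  linear_combination symPow_recurrence (lam_ne_zero hα0 hκ hl) (lam_quadratic hα0 hκ hl) m /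
    (2 * κ * (1 - l ^ (4 * N)))

theorem rightSolution_recurrence (hα0 : α ≠ 0) (hκ : κ ^ 2 = 1 - α ^ 2) (hl : l = -(1 - κ) / α)
    (m : ℤ) :
    α * rightSolution l N (m - 1) + 2 * rightSolution l N m +
      α * rightSolution l N (m + 1) = 0 := by
  have h := symPow_recurrence (lam_ne_zero hα0 hκ hl) (lam_quadratic hα0 hκ hl) (m - 2 * N)
  rw [sub_right_comm, sub_add_eq_add_sub] at h
  simp only [rightSolution]
  linear_combination l ^ (2 * (N : ℤ)) * h

theorem leftSolution_neg_one : leftSolution κ l N (-1) = leftSolution κ l N 1 := by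
  rw [leftSolution, symPow_neg, leftSolution]

theorem rightSolution_two_mul_sub_one :
    rightSolution l N (2 * N - 1) = rightSolution l N (2 * N + 1) := by
  rw [rightSolution, rightSolution, sub_sub_cancel_left, add_sub_cancel_left, symPow_neg]

theorem one_sub_lam_pow_ne_zero (hα0 : α ≠ 0) (hκpos : 0 < κ) (hκ : κ ^ 2 = 1 - α ^ 2)
    (hl : l = -(1 - κ) / α) (hN : 0 < N) : 1 - l ^ (4 * N) ≠ 0 := by
  have h := pow_lt_one₀ (sq_nonneg l) (lam_sq_lt_one hα0 hκpos hκ hl) (by omega : 2 * N ≠ 0)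
  rw [← pow_mul, show 2 * (2 * N) = 4 * N by ring] at h
  linarith

theorem solution_wronskian (hα0 : α ≠ 0) (hκpos : 0 < κ) (hκ : κ ^ 2 = 1 - α ^ 2)
    (hl : l = -(1 - κ) / α) (hN : 0 < N) (m : ℤ) :
    α * (leftSolution κ l N m * rightSolution l N (m + 1) -
      leftSolution κ l N (m + 1) * rightSolution l N m) = 1 := by
  have hl0 := lam_ne_zero hα0 hκ hl
  have hy : l ^ (2 * (N : ℤ)) ≠ 0 := zpow_ne_zero _ hl0
  have h4N : l ^ (4 * N) = l ^ (2 * (N : ℤ)) * l ^ (2 * (N : ℤ)) := by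
    rw [← zpow_add₀ hl0, ← zpow_natCast]
    push_cast
    ring_nf
  have hD : 2 * κ * (1 - l ^ (4 * N)) ≠ 0 :=
    mul_ne_zero (mul_ne_zero two_ne_zero hκpos.ne') (one_sub_lam_pow_ne_zero hα0 hκpos hκ hl hN)
  calc α * (leftSolution κ l N m * rightSolution l N (m + 1) -
        leftSolution κ l N (m + 1) * rightSolution l N m)
      = α * l ^ (2 * (N : ℤ)) * (symPow l m * symPow l (m + 1 - 2 * N) -
          symPow l (m + 1) * symPow l (m - 2 * N)) / (2 * κ * (1 - l ^ (4 * N))) := by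
        simp only [leftSolution, rightSolution]
        ring
    _ = 1 := by
      rw [symPow_wronskian hl0, zpow_neg, div_eq_one_iff_eq hD, h4N]
      linear_combination (l ^ (2 * (N : ℤ)) * l ^ (2 * (N : ℤ)) - 1) * lam_wronskian hα0 hκ hl -
        α * (l⁻¹ - l) * mul_inv_cancel₀ hy

end Solutions

section FreeHessian

open Matrix

variable {N : ℕ} {α : ℝ}

def freeHessian (N : ℕ) (α : ℝ) : Matrix (Fin (2 * N + 1)) (Fin (2 * N + 1)) ℝ :=
  of fun i j =>
    if i = j then (if (i : ℕ) = 0 ∨ (i : ℕ) = 2 * N then 1 else 2)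
    else if ((i : ℤ) - (j : ℤ)).natAbs = 1 then α else 0

theorem freeHessian_isTridiagonal : (freeHessian N α).IsTridiagonal := by
  intro i k hik
  rw [freeHessian, of_apply, if_neg (by rintro rfl; simp at hik), if_neg (by omega)]

theorem freeHessian_isSymm : (freeHessian N α).IsSymm := by
  refine IsSymm.ext fun i j => ?_
  simp only [freeHessian, of_apply]
  by_cases hij : i = j
  · subst hij; rfl
  · rw [if_neg hij, if_neg (Ne.symm hij), ← Int.natAbs_neg, neg_sub]

theorem freeHessian_mulVec_apply (W : ℤ → ℝ) (i : Fin (2 * N + 1)) :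
    (freeHessian N α *ᵥ fun k => W k) i =
      (if (i : ℕ) = 0 ∨ (i : ℕ) = 2 * N then 1 else 2) * W i +
        (if 0 < (i : ℕ) then α * W (i - 1) else 0) +
          (if (i : ℕ) < 2 * N then α * W (i + 1) else 0) := by
  have hterm : ∀ k : Fin (2 * N + 1), freeHessian N α i k * W k =
      (if (k : ℤ) = i then (if (i : ℕ) = 0 ∨ (i : ℕ) = 2 * N then 1 else 2) * W i else 0) +
        (if (k : ℤ) = i - 1 then α * W (i - 1) else 0) +
          (if (k : ℤ) = i + 1 then α * W (i + 1) else 0) := by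
    intro k
    simp only [freeHessian, of_apply, Fin.ext_iff]
    split_ifs <;> first | omega | simp_all
  simp only [mulVec, dotProduct, hterm, sum_add_distrib, Fin.sum_ite_val_eq]
  split_ifs <;> first | omega | simp

-- A boundary row, with diagonal entry `1`, is half of the recurrence at a point about which the
-- solution is even.
theorem freeHessian_mulVec_eq_zero (hN : 0 < N) {W : ℤ → ℝ}
    (hrec : ∀ m, α * W (m - 1) + 2 * W m + α * W (m + 1) = 0) (i : Fin (2 * N + 1))
    (hfirst : (i : ℕ) = 0 → W (-1) = W 1)
    (hlast : (i : ℕ) = 2 * N → W (2 * N - 1) = W (2 * N + 1)) :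
    (freeHessian N α *ᵥ fun k => W k) i = 0 := by
  rw [freeHessian_mulVec_apply]
  rcases Nat.eq_zero_or_pos (i : ℕ) with hi | hi
  · have hW := hfirst hi
    have hrec0 := hrec 0
    simp only [hi, true_or, if_true, lt_irrefl, if_false, Nat.cast_zero, zero_add, zero_sub,
      show 0 < 2 * N by omega] at hrec0 ⊢
    linear_combination (hrec0 - α * hW) / 2
  rcases eq_or_lt_of_le (Nat.le_of_lt_succ i.isLt) with hi' | hi'
  · have hW := hlast hi'
    have hrecN := hrec (2 * N)
    simp only [hi', or_true, if_true, lt_irrefl, if_false, show 0 < 2 * N by omega, add_zero]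
    push_cast
    linear_combination (hrecN + α * hW) / 2
  · simp only [hi, hi', if_true, show (i : ℕ) ≠ 0 by omega, show (i : ℕ) ≠ 2 * N by omega,
      or_self, if_false]
    linear_combination hrec i

theorem freeHessian_mul_greenMatrix {κ l : ℝ} (hN : 0 < N) (hα0 : α ≠ 0) (hκpos : 0 < κ)
    (hκ : κ ^ 2 = 1 - α ^ 2) (hl : l = -(1 - κ) / α) :
    freeHessian N α *
      greenMatrix (fun k => leftSolution κ l N k) (fun k => rightSolution l N k) = 1 := by
  refine mul_greenMatrix_eq_one (by omega) freeHessian_isTridiagonal freeHessian_isSymm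
    (fun i _ => freeHessian_mulVec_eq_zero hN (leftSolution_recurrence hα0 hκ hl) i
      (fun _ => leftSolution_neg_one) (fun _ => by omega))
    (fun i _ => freeHessian_mulVec_eq_zero hN (rightSolution_recurrence hα0 hκ hl) i
      (fun _ => by omega) (fun _ => rightSolution_two_mul_sub_one))
    (fun i k hik => ?_)
  have hHik : freeHessian N α i k = α := by
    rw [freeHessian, of_apply, if_neg (fun h => by rw [h] at hik; omega), if_pos (by omega)]
  rw [hHik, show ((k : ℕ) : ℤ) = i + 1 by omega]
  exact solution_wronskian hα0 hκpos hκ hl hN i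

end FreeHessian

/-- explicit inverse of the tridiagonal Hessian with free boundary
conditions.  Matrices are indexed by `Fin (2N+1)`, where the index `i` corresponds to
the integer index `i' = i - N ∈ {-N,…,N}` of the paper. -/
theorem stmt_7 (N : ℕ) (hN : 1 ≤ N) (α : ℝ) (hα : α ∈ Set.Ioo (-1 : ℝ) 1) (hα0 : α ≠ 0)
    (κ l : ℝ) (hκ : κ = Real.sqrt (1 - α ^ 2)) (hl : l = -(1 - κ) / α)
    (H M : Matrix (Fin (2 * N + 1)) (Fin (2 * N + 1)) ℝ)
    (hH : ∀ i j : Fin (2 * N + 1),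
      H i j =
        if i = j then (if (i : ℕ) = 0 ∨ (i : ℕ) = 2 * N then 1 else 2)
        else if ((i : ℤ) - (j : ℤ)).natAbs = 1 then α else 0)
    (hM : ∀ i j : Fin (2 * N + 1),
      M i j =
        if ((j : ℤ) - N) ≤ ((i : ℤ) - N) then
          l ^ (-(((i : ℤ) - N) + ((j : ℤ) - N))) *
              (l ^ (2 * ((i : ℤ) - N)) + l ^ (2 * (N : ℤ))) *
              (l ^ (2 * (((j : ℤ) - N) + N)) + 1) /
            (2 * κ * (1 - l ^ (4 * N)))
        else
          l ^ (-(((i : ℤ) - N) + ((j : ℤ) - N))) *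
              (l ^ (2 * ((j : ℤ) - N)) + l ^ (2 * (N : ℤ))) *
              (l ^ (2 * (((i : ℤ) - N) + N)) + 1) /
            (2 * κ * (1 - l ^ (4 * N)))) :
    IsUnit H ∧ M = H⁻¹ := by
  have hα2 : α ^ 2 < 1 := by nlinarith [hα.1, hα.2]
  have hκsq : κ ^ 2 = 1 - α ^ 2 := hκ ▸ Real.sq_sqrt (by linarith)
  have hκpos : 0 < κ := hκ ▸ Real.sqrt_pos.2 (by linarith)
  have hl0 := lam_ne_zero hα0 hκsq hl
  have hH' : H = freeHessian N α := Matrix.ext hH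
  have hM' : M = Matrix.greenMatrix (fun k => leftSolution κ l N k)
      (fun k => rightSolution l N k) := by
    ext i j
    rw [hM, Matrix.greenMatrix, Matrix.of_apply, leftSolution, leftSolution, rightSolution,
      rightSolution]
    split_ifs with hji hji' hji'
    · rw [zpow_neg_add_mul_eq_mul_symPow hl0, sub_add_cancel, sub_sub, ← two_mul]
      ring
    · exact absurd (Fin.le_def.2 (by omega)) hji'
    · exact absurd (by rw [Fin.le_def] at hji'; omega) hji
    · rw [add_comm, zpow_neg_add_mul_eq_mul_symPow hl0, sub_add_cancel, sub_sub, ← two_mul]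
      ring
  have hHM : H * M = 1 := hH' ▸ hM' ▸ freeHessian_mul_greenMatrix hN hα0 hκpos hκsq hl
  exact ⟨.of_mul_eq_one M hHM, (Matrix.inv_eq_right_inv hHM).symm⟩
end

section
/- For λ ∈ ℝ and κ > 0 define the error coefficients err₁^fr := (1+λ+λ²+λ³)/(κ²(1−λ³)), err₂^fr := (1+λ)(1+2λ+6λ²+2λ³+λ⁴)/(2κ²(1−λ³)), err₁^qc := (λ²+λ³)/(κ²(1−λ³)), and err₂^qc := (1+λ)(λ+2λ²+2λ⁴+λ⁵)/(2κ²(1−λ³)). Then for every λ ∈ (−1,1) and every κ > 0 one has |err₁^qc| < |err₁^fr| and |err₂^qc| < |err₂^fr|. -/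
/-- comparison of the error coefficients of the QC method and free BCs. -/
theorem stmt_13 (l κ : ℝ) (hl : l ∈ Set.Ioo (-1 : ℝ) 1) (hκ : 0 < κ) :
    |(l ^ 2 + l ^ 3) / (κ ^ 2 * (1 - l ^ 3))| <
      |(1 + l + l ^ 2 + l ^ 3) / (κ ^ 2 * (1 - l ^ 3))| ∧
    |((1 + l) * (l + 2 * l ^ 2 + 2 * l ^ 4 + l ^ 5)) / (2 * κ ^ 2 * (1 - l ^ 3))| <
      |((1 + l) * (1 + 2 * l + 6 * l ^ 2 + 2 * l ^ 3 + l ^ 4)) / (2 * κ ^ 2 * (1 - l ^ 3))| := by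
  obtain ⟨h1, h2⟩ := hl
  have h1' : (0:ℝ) < 1 + l := by linarith
  have hl3 : (0:ℝ) < 1 - l ^ 3 := by nlinarith [sq_nonneg l, sq_nonneg (1 + l), sq_nonneg (1 - l)]
  have hd1 : (0:ℝ) < κ ^ 2 * (1 - l ^ 3) := by positivity
  have hd2 : (0:ℝ) < 2 * κ ^ 2 * (1 - l ^ 3) := by positivity
  have hn1 : (0:ℝ) < 1 + l + l ^ 2 + l ^ 3 := by nlinarith [sq_nonneg l]
  have hn2 : (0:ℝ) < (1 + l) * (1 + 2 * l + 6 * l ^ 2 + 2 * l ^ 3 + l ^ 4) := by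
    have : (0:ℝ) < 1 + 2 * l + 6 * l ^ 2 + 2 * l ^ 3 + l ^ 4 := by
      nlinarith [sq_nonneg (1 + l), sq_nonneg (l + l ^ 2), sq_nonneg l]
    positivity
  have hl4 : (0:ℝ) < 1 - l ^ 4 := by nlinarith [sq_nonneg l, sq_nonneg (1 - l^2), sq_nonneg (1 + l^2)]
  constructor
  · rw [abs_div, abs_div, abs_of_pos hd1, abs_of_pos hn1,
      div_lt_div_iff_of_pos_right hd1, abs_lt]
    constructor
    · nlinarith [mul_nonneg (sq_nonneg l) h1'.le]
    · nlinarith [mul_nonneg (sq_nonneg l) h1'.le]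
  · rw [abs_div, abs_div, abs_of_pos hd2, abs_of_pos hn2,
      div_lt_div_iff_of_pos_right hd2, abs_lt]
    constructor
    · nlinarith [mul_pos h1' hl4, mul_nonneg (sq_nonneg l) (by linarith : (0:ℝ) ≤ 2 + l),
        sq_nonneg (1 + 2 * l), mul_nonneg (mul_nonneg (sq_nonneg l) (sq_nonneg l)) h1'.le,
        mul_pos h1' h1', mul_nonneg (sq_nonneg l) h1'.le]
    · nlinarith [mul_pos h1' hl4, mul_nonneg (sq_nonneg l) (by linarith : (0:ℝ) ≤ 2 + l),
        mul_pos (mul_pos h1' hl4) h1', mul_nonneg (mul_nonneg (sq_nonneg l) (by linarith : (0:ℝ) ≤ 2 + l)) h1'.le]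
end

section
/- Let L ∈ ℕ, R > 0, 0 < c ≤ R, α ≥ 0, μ₀ > 0, and let g : ℂ → ℂ be analytic on the open disk {w ∈ ℂ : |w| < R}. Let μ ∈ (0, μ₀] and let f(z) = Σ_{ℓ=1}^{L+1} f^{(ℓ)} z^ℓ be a polynomial with complex coefficients satisfying |f^{(ℓ)}| ≤ c μ^{−ℓα} for ℓ = 1,…,L+1, and set r := min{μ^α/3, R/3}. Then |f(z)| ≤ R/2 for all |z| ≤ r, the composition g∘f is analytic on {|z| < r}, and there exists a constant C > 0 depending only on L, R, α, μ₀, and M_g := sup_{|w| ≤ R/2} |g(w)| (but not on μ or f) such that the Taylor coefficients of g∘f at 0 satisfy |(1/ℓ!) (g∘f)^{(ℓ)}(0)| ≤ C μ^{−ℓα} for all ℓ = 0,…,L−1. -/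
/-!
With `a := μ ^ α`, the hypothesis reads `‖f_ℓ‖ ≤ c a⁻ℓ`, so on `‖z‖ ≤ a / 3` the polynomial is
dominated by the geometric series `c ∑ 3⁻ℓ ≤ c / 2 ≤ R / 2`. Hence `g ∘ f` is holomorphic on the
closed disc of radius `r = min (a / 3) (R / 3)` and bounded there by `M := sup_{|w| ≤ R/2} |g w|`,
and Cauchy's estimate bounds its `ℓ`-th Taylor coefficient by `M r⁻ℓ`. Finally
`r⁻¹ ≤ 3 (1 + μ₀ ^ α / R) a⁻¹`, which turns `M r⁻ℓ` into `C μ^(-ℓα)` with `C` independent of `μ`.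
-/

open Metric Finset

lemma Real.rpow_neg_natCast_mul {μ : ℝ} (hμ : 0 ≤ μ) (ℓ : ℕ) (α : ℝ) :
    μ ^ (-(ℓ : ℝ) * α) = ((μ ^ α)⁻¹) ^ ℓ := by
  rw [neg_mul, Real.rpow_neg hμ, mul_comm, Real.rpow_mul_natCast hμ, inv_pow]

lemma sum_Icc_one_third_pow_le_half (n : ℕ) : ∑ ℓ ∈ Icc 1 n, (1 / 3 : ℝ) ^ ℓ ≤ 1 / 2 := by
  rw [← Ico_add_one_right_eq_Icc]
  calc ∑ ℓ ∈ Ico 1 (n + 1), (1 / 3 : ℝ) ^ ℓ ≤ (1 / 3) ^ 1 / (1 - 1 / 3) :=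
        geom_sum_Ico_le_of_lt_one (by norm_num) (by norm_num)
    _ = 1 / 2 := by norm_num

lemma norm_sum_Icc_mul_pow_le_half {N : ℕ} {p : ℕ → ℂ} {c s : ℝ} (hc : 0 ≤ c) (hs : 0 < s)
    (hp : ∀ ℓ ∈ Icc 1 N, ‖p ℓ‖ ≤ c * (s⁻¹) ^ ℓ) {z : ℂ} (hz : ‖z‖ ≤ s / 3) :
    ‖∑ ℓ ∈ Icc 1 N, p ℓ * z ^ ℓ‖ ≤ c / 2 := by
  have hterm : ∀ ℓ ∈ Icc 1 N, ‖p ℓ * z ^ ℓ‖ ≤ c * (1 / 3) ^ ℓ := fun ℓ hℓ ↦ by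
    calc ‖p ℓ * z ^ ℓ‖ = ‖p ℓ‖ * ‖z‖ ^ ℓ := by rw [norm_mul, norm_pow]
      _ ≤ c * (s⁻¹) ^ ℓ * (s / 3) ^ ℓ := by gcongr; exact hp ℓ hℓ
      _ = c * (1 / 3) ^ ℓ := by rw [mul_assoc, ← mul_pow]; field_simp
  calc ‖∑ ℓ ∈ Icc 1 N, p ℓ * z ^ ℓ‖ ≤ ∑ ℓ ∈ Icc 1 N, c * (1 / 3 : ℝ) ^ ℓ :=
        (norm_sum_le _ _).trans (sum_le_sum hterm)
    _ ≤ c * (1 / 2) := by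
        rw [← mul_sum]; exact mul_le_mul_of_nonneg_left (sum_Icc_one_third_pow_le_half N) hc
    _ = c / 2 := by ring

lemma inv_min_div_three_le {a b R : ℝ} (ha : 0 < a) (hR : 0 < R) (hab : a ≤ b) :
    (min (a / 3) (R / 3))⁻¹ ≤ 3 * (1 + b / R) * a⁻¹ := by
  rcases min_choice (a / 3) (R / 3) with h | h <;> rw [h]
  · have : 0 ≤ b / R := div_nonneg (ha.le.trans hab) hR.le
    rw [inv_div, div_eq_mul_inv]
    nlinarith [inv_pos.mpr ha]
  · rw [inv_div, div_le_iff₀ hR]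
    field_simp
    nlinarith

lemma Complex.norm_iteratedDeriv_div_factorial_le {f : ℂ → ℂ} {z₀ : ℂ} {r M : ℝ} (n : ℕ)
    (hr : 0 < r) (hf : DifferentiableOn ℂ f (closedBall z₀ r))
    (hM : ∀ z ∈ closedBall z₀ r, ‖f z‖ ≤ M) :
    ‖iteratedDeriv n f z₀ / n.factorial‖ ≤ M * (r⁻¹) ^ n := by
  have hcauchy := norm_iteratedDeriv_le_of_forall_mem_sphere_norm_le n hr
    (hf.diffContOnCl_ball subset_rfl) fun z hz ↦ hM z (sphere_subset_closedBall hz)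
  rw [norm_div, Complex.norm_natCast, div_le_iff₀ (by positivity), inv_pow]
  calc ‖iteratedDeriv n f z₀‖ ≤ n.factorial * M / r ^ n := hcauchy
    _ = M * (r ^ n)⁻¹ * n.factorial := by ring

/-- uniform bounds on the Taylor coefficients of the composition `g ∘ f`. -/
theorem stmt_14 (L : ℕ) (R c α μ₀ : ℝ) (hR : 0 < R) (hc : 0 < c) (hcR : c ≤ R)
    (hα : 0 ≤ α) (hμ₀ : 0 < μ₀) (g : ℂ → ℂ)
    (hg : DifferentiableOn ℂ g (Metric.ball (0 : ℂ) R)) :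
    ∃ C : ℝ, 0 < C ∧
      ∀ μ : ℝ, μ ∈ Set.Ioc 0 μ₀ → ∀ fc : ℕ → ℂ,
        (∀ ℓ : ℕ, 1 ≤ ℓ → ℓ ≤ L + 1 → ‖fc ℓ‖ ≤ c * μ ^ (-(ℓ : ℝ) * α)) →
        (∀ z : ℂ, ‖z‖ ≤ min (μ ^ α / 3) (R / 3) →
          ‖∑ ℓ ∈ Finset.Icc 1 (L + 1), fc ℓ * z ^ ℓ‖ ≤ R / 2) ∧
        DifferentiableOn ℂ (fun z : ℂ => g (∑ ℓ ∈ Finset.Icc 1 (L + 1), fc ℓ * z ^ ℓ))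
          (Metric.ball (0 : ℂ) (min (μ ^ α / 3) (R / 3))) ∧
        ∀ ℓ : ℕ, ℓ < L →
          ‖
              (iteratedDeriv ℓ (fun z : ℂ => g (∑ k ∈ Finset.Icc 1 (L + 1), fc k * z ^ k)) 0 /
                (Nat.factorial ℓ : ℂ))‖ ≤
            C * μ ^ (-(ℓ : ℝ) * α) := by
  obtain ⟨M, hM⟩ := (isCompact_closedBall (0 : ℂ) (R / 2)).exists_bound_of_continuousOn
    (hg.continuousOn.mono (closedBall_subset_ball (by linarith)))
  have hM0 : 0 ≤ M := (norm_nonneg _).trans (hM 0 (mem_closedBall_self (by linarith)))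
  set K := 3 * (1 + μ₀ ^ α / R)
  have hK : 1 ≤ K := by have := div_nonneg (Real.rpow_nonneg hμ₀.le α) hR.le; linarith
  refine ⟨(M + 1) * K ^ L, by positivity, fun μ ⟨hμ, hμμ₀⟩ fc hfc ↦ ?_⟩
  set r := min (μ ^ α / 3) (R / 3)
  have hμα : 0 < μ ^ α := Real.rpow_pos_of_pos hμ α
  have hr : 0 < r := lt_min (by positivity) (by positivity)
  have hf : ∀ z : ℂ, ‖z‖ ≤ r → ‖∑ ℓ ∈ Icc 1 (L + 1), fc ℓ * z ^ ℓ‖ ≤ R / 2 := fun z hz ↦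
    calc _ ≤ c / 2 := norm_sum_Icc_mul_pow_le_half hc.le hμα
            (fun ℓ hℓ ↦ Real.rpow_neg_natCast_mul hμ.le ℓ α ▸ hfc ℓ (mem_Icc.1 hℓ).1
              (mem_Icc.1 hℓ).2)
            (hz.trans (min_le_left _ _))
      _ ≤ R / 2 := by linarith
  have hgf : DifferentiableOn ℂ (fun z ↦ g (∑ ℓ ∈ Icc 1 (L + 1), fc ℓ * z ^ ℓ)) (closedBall 0 r) :=
    hg.comp (by fun_prop) fun z hz ↦
      mem_ball_zero_iff.2 ((hf z (mem_closedBall_zero_iff.1 hz)).trans_lt (by linarith))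
  refine ⟨hf, hgf.mono ball_subset_closedBall, fun ℓ hℓ ↦ ?_⟩
  calc _ ≤ M * (r⁻¹) ^ ℓ := Complex.norm_iteratedDeriv_div_factorial_le ℓ hr hgf
          fun z hz ↦ hM _ (mem_closedBall_zero_iff.2 (hf z (mem_closedBall_zero_iff.1 hz)))
    _ ≤ M * (K * (μ ^ α)⁻¹) ^ ℓ := by
        gcongr; exact inv_min_div_three_le hμα hR (Real.rpow_le_rpow hμ.le hμμ₀ hα)
    _ = M * K ^ ℓ * μ ^ (-(ℓ : ℝ) * α) := by
        rw [Real.rpow_neg_natCast_mul hμ.le, mul_pow, mul_assoc]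
    _ ≤ (M + 1) * K ^ L * μ ^ (-(ℓ : ℝ) * α) := by
        gcongr
        · linarith
end

section
/- Let θ > 0, W_F ∈ ℝ, and α₀, α₁ ∈ ℝ with α₀ > |α₁|. For each integer N ≥ 1 define the periodic quadratic form Q_N(v) := Σ_{j ∈ ℤ/Nℤ} (α₀ v_j² + α₁ v_j v_{j+1}) on ℝ^N and the free energy per atom W_{θ,N} := −(θ/N) log( ∫_{ℝ^N} exp(−θ⁻¹(N·W_F + Q_N(v))) dv ). Then lim_{N→∞} W_{θ,N} = W_F + (θ/2) log(1/(πθ)) + (θ/2) log((α₀ + √(α₀² − α₁²))/2). -/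
/-!
Write `α₀ = s² + t²` and `α₁ = 2st` with `|t| < s`. The periodic form is then a sum of squares,
`Q_N(v) = ∑ⱼ (s vⱼ + t vⱼ₊₁)² = |B v|²` with `B = s + t · (cyclic shift)`, so a linear change of
variables reduces the partition function to a standard Gaussian integral,
`∫ exp (-θ⁻¹ (N W_F + Q_N)) = exp (-N W_F / θ) (πθ)^(N/2) / |det B|`.
The characters of `ℤ/Nℤ` diagonalise `B`, so `det B = ∏_{ζ^N = 1} (s + tζ) = s^N - (-t)^N` and
`W_{θ,N} = W_F + (θ/2) log (1/(πθ)) + (θ/N) log |s^N - (-t)^N|`, whose last term tends to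
`θ log s = (θ/2) log ((α₀ + √(α₀² - α₁²))/2)`.
-/

open Filter Topology Real MeasureTheory Finset

theorem LinearMap.det_eq_prod_of_apply_basis {K M ι : Type*} [CommRing K] [AddCommGroup M]
    [Module K M] [Fintype ι] [DecidableEq ι] (b : Module.Basis ι K M) (f : M →ₗ[K] M)
    (μ : ι → K) (hf : ∀ i, f (b i) = μ i • b i) : LinearMap.det f = ∏ i, μ i := by
  rw [← LinearMap.det_toMatrix b, ← Matrix.det_diagonal]
  congr 1
  ext i j
  rcases eq_or_ne i j with rfl | h
  · simp [LinearMap.toMatrix_apply, hf]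
  · simp [LinearMap.toMatrix_apply, hf, h]

section TwoPointStencil

variable {G R : Type*} [AddCommGroup G] [CommRing R]

noncomputable def twoPointStencil (s t : R) (a : G) : (G → R) →ₗ[R] G → R :=
  s • LinearMap.id + t • LinearMap.funLeft R R (· + a)

@[simp]
theorem twoPointStencil_apply (s t : R) (a : G) (v : G → R) (g : G) :
    twoPointStencil s t a v g = s * v g + t * v (g + a) := rfl

theorem twoPointStencil_addChar (s t : R) (a : G) (ψ : AddChar G R) :
    twoPointStencil s t a ψ = (s + t * ψ a) • ⇑ψ := by
  ext g
  simp only [twoPointStencil_apply, AddChar.map_add_eq_mul, Pi.smul_apply, smul_eq_mul]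
  ring

variable [Fintype G]

theorem sum_twoPointStencil_sq (s t : R) (a : G) (v : G → R) :
    ∑ g, twoPointStencil s t a v g ^ 2 =
      ∑ g, ((s ^ 2 + t ^ 2) * v g ^ 2 + 2 * s * t * (v g * v (g + a))) := by
  have hshift : ∑ g, v (g + a) ^ 2 = ∑ g, v g ^ 2 :=
    Fintype.sum_equiv (Equiv.addRight a) _ _ fun _ => rfl
  calc ∑ g, twoPointStencil s t a v g ^ 2
      = ∑ g, (s ^ 2 * v g ^ 2 + 2 * s * t * (v g * v (g + a))) +
          t ^ 2 * ∑ g, v (g + a) ^ 2 := by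
        rw [mul_sum, ← sum_add_distrib]
        exact sum_congr rfl fun g _ => by simp only [twoPointStencil_apply]; ring
    _ = _ := by
        rw [hshift, mul_sum, ← sum_add_distrib]
        exact sum_congr rfl fun g _ => by ring

theorem det_twoPointStencil_map [DecidableEq G] {S : Type*} [CommRing S] (φ : R →+* S)
    (s t : R) (a : G) :
    φ (LinearMap.det (twoPointStencil s t a)) =
      LinearMap.det (twoPointStencil (φ s) (φ t) a) := by
  rw [← LinearMap.det_toMatrix', ← LinearMap.det_toMatrix', RingHom.map_det]
  congr 1
  ext i j
  simp [LinearMap.toMatrix'_apply, Pi.single_apply, apply_ite φ]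

theorem det_twoPointStencil_complex (s t : ℂ) (a : G) :
    LinearMap.det (twoPointStencil s t a) = ∏ ψ : AddChar G ℂ, (s + t * ψ a) := by
  classical
  refine LinearMap.det_eq_prod_of_apply_basis (AddChar.complexBasis G) _ _ fun ψ => ?_
  rw [AddChar.complexBasis_apply, twoPointStencil_addChar]

end TwoPointStencil

-- `ψ ↦ ψ 1` is a bijection from the characters of `Fin N` onto the `N`-th roots of unity.
open Fin.NatCast in
theorem prod_addChar_fin_one (N : ℕ) [NeZero N] (s t : ℂ) :
    ∏ ψ : AddChar (Fin N) ℂ, (s + t * ψ 1) = s ^ N - (-t) ^ N := by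
  classical
  have hN : 0 < N := Nat.pos_of_ne_zero (NeZero.ne N)
  have hζ := Complex.isPrimitiveRoot_exp N hN.ne'
  have hinj : Function.Injective fun ψ : AddChar (Fin N) ℂ => ψ 1 := fun ψ φ h => by
    ext j
    rw [← Fin.cast_val_eq_self j, ← nsmul_one, AddChar.map_nsmul_eq_pow,
      AddChar.map_nsmul_eq_pow]
    exact congrArg (· ^ (j : ℕ)) h
  have himage : univ.image (fun ψ : AddChar (Fin N) ℂ => ψ 1) =
      Polynomial.nthRootsFinset N (1 : ℂ) := by
    refine eq_of_subset_of_card_le (fun z hz => ?_) ?_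
    · obtain ⟨ψ, -, rfl⟩ := mem_image.mp hz
      rw [Polynomial.mem_nthRootsFinset hN, ← AddChar.map_nsmul_eq_pow, nsmul_one,
        Fin.natCast_self, AddChar.map_zero_eq_one]
    · rw [card_image_of_injective _ hinj, card_univ, AddChar.card_eq, Fintype.card_fin,
        hζ.card_nthRootsFinset]
  rw [hζ.pow_sub_pow_eq_prod_sub_mul _ _ hN, ← himage, prod_image fun ψ _ φ _ h => hinj h]
  exact prod_congr rfl fun ψ _ => by ring

theorem det_twoPointStencil_fin_one (N : ℕ) [NeZero N] (s t : ℝ) :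
    LinearMap.det (twoPointStencil s t (1 : Fin N)) = s ^ N - (-t) ^ N := by
  apply Complex.ofReal_injective
  rw [← Complex.ofRealHom_eq_coe, det_twoPointStencil_map, det_twoPointStencil_complex]
  simp [prod_addChar_fin_one]

theorem MeasureTheory.Measure.integral_comp_linearMap {E F : Type*} [NormedAddCommGroup E]
    [NormedSpace ℝ E] [MeasurableSpace E] [BorelSpace E] [FiniteDimensional ℝ E]
    [NormedAddCommGroup F] [NormedSpace ℝ F] (μ : Measure E) [μ.IsAddHaarMeasure]
    {f : E →ₗ[ℝ] E} (hf : LinearMap.det f ≠ 0) (g : E → F) :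
    ∫ x, g (f x) ∂μ = |(LinearMap.det f)⁻¹| • ∫ x, g x ∂μ := by
  let e := (LinearMap.toContinuousLinearMap f).toContinuousLinearEquivOfDetNeZero hf
  calc ∫ x, g (f x) ∂μ = ∫ x, g x ∂(Measure.map e.toHomeomorph.toMeasurableEquiv μ) := by
        rw [integral_map_equiv]; rfl
    _ = |(LinearMap.det f)⁻¹| • ∫ x, g x ∂μ := by
        have he : ⇑e.toHomeomorph.toMeasurableEquiv = f := rfl
        rw [he, map_linearMap_addHaar_eq_smul_addHaar μ hf, integral_smul_measure,
          ENNReal.toReal_ofReal (abs_nonneg _)]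

theorem integral_exp_neg_mul_sum_sq (ι : Type*) [Fintype ι] (c : ℝ) :
    ∫ v : ι → ℝ, exp (-c * ∑ i, v i ^ 2) = √(π / c) ^ Fintype.card ι := by
  simp_rw [mul_sum, exp_sum]
  rw [← integral_gaussian, ← integral_fintype_prod_eq_pow]
  rfl

theorem integral_exp_neg_mul_sum_sq_linearMap {ι : Type*} [Fintype ι] (c : ℝ)
    {f : (ι → ℝ) →ₗ[ℝ] ι → ℝ} (hf : LinearMap.det f ≠ 0) :
    ∫ v : ι → ℝ, exp (-c * ∑ i, f v i ^ 2) =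
      |(LinearMap.det f)⁻¹| * √(π / c) ^ Fintype.card ι := by
  rw [Measure.integral_comp_linearMap volume hf (fun w => exp (-c * ∑ i, w i ^ 2)),
    integral_exp_neg_mul_sum_sq, smul_eq_mul]

noncomputable def freeEnergy (θ WF : ℝ) (N : ℕ) (Q : (Fin N → ℝ) → ℝ) : ℝ :=
  -(θ / N) * log (∫ v : Fin N → ℝ, exp (-θ⁻¹ * (N * WF + Q v)))

theorem freeEnergy_sum_twoPointStencil_sq {θ WF s t : ℝ} (hθ : 0 < θ) {N : ℕ} [NeZero N]
    (hdet : s ^ N - (-t) ^ N ≠ 0) :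
    freeEnergy θ WF N (fun v => ∑ j, twoPointStencil s t (1 : Fin N) v j ^ 2) =
      WF + θ / 2 * log (1 / (π * θ)) + θ * (log |s ^ N - (-t) ^ N| / N) := by
  have hdet' : LinearMap.det (twoPointStencil s t (1 : Fin N)) ≠ 0 := by
    rwa [det_twoPointStencil_fin_one]
  have hN : (N : ℝ) ≠ 0 := Nat.cast_ne_zero.mpr (NeZero.ne N)
  simp_rw [freeEnergy, mul_add, exp_add]
  rw [integral_const_mul, integral_exp_neg_mul_sum_sq_linearMap _ hdet',
    det_twoPointStencil_fin_one, Fintype.card_fin, div_inv_eq_mul,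
    log_mul (exp_ne_zero _) (by positivity), log_exp, log_mul (by positivity) (by positivity),
    abs_inv, log_inv, log_pow, log_sqrt (by positivity), one_div, log_inv]
  field_simp
  ring

-- `s²` and `t²` are the two roots of `X² - α₀ X + α₁² / 4`.
theorem exists_sq_add_sq_eq_of_abs_lt {α₀ α₁ : ℝ} (h : |α₁| < α₀) :
    ∃ s t : ℝ, |t| < s ∧ s ^ 2 + t ^ 2 = α₀ ∧ 2 * s * t = α₁ ∧
      s ^ 2 = (α₀ + √(α₀ ^ 2 - α₁ ^ 2)) / 2 := by
  have hdisc : 0 < α₀ ^ 2 - α₁ ^ 2 := by nlinarith [sq_abs α₁, abs_nonneg α₁]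
  set d := √(α₀ ^ 2 - α₁ ^ 2)
  have hd : 0 < d := sqrt_pos.mpr hdisc
  have hd2 : d ^ 2 = α₀ ^ 2 - α₁ ^ 2 := sq_sqrt hdisc.le
  have hα₀ : 0 < α₀ := (abs_nonneg α₁).trans_lt h
  set s := √((α₀ + d) / 2)
  have hs2 : s ^ 2 = (α₀ + d) / 2 := sq_sqrt (by positivity)
  have hs : 0 < s := sqrt_pos.mpr (by positivity)
  have ht2 : (α₁ / (2 * s)) ^ 2 = (α₀ - d) / 2 := by
    rw [div_pow, mul_pow, hs2]
    field_simp
    nlinarith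
  refine ⟨s, α₁ / (2 * s), ?_, by rw [hs2, ht2]; ring, by field_simp, hs2⟩
  exact abs_lt_of_sq_lt_sq (by rw [hs2, ht2]; linarith) hs.le

theorem pow_sub_pow_ne_zero_of_abs_lt {a b : ℝ} (h : |b| < a) {N : ℕ} (hN : N ≠ 0) :
    a ^ N - b ^ N ≠ 0 :=
  sub_ne_zero.mpr (lt_of_abs_lt ((abs_pow b N).symm ▸
    pow_lt_pow_left₀ h (abs_nonneg b) hN)).ne'

theorem tendsto_log_abs_pow_sub_pow_div {a b : ℝ} (h : |b| < a) :
    Tendsto (fun N : ℕ => log |a ^ N - b ^ N| / N) atTop (𝓝 (log a)) := by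
  have ha : 0 < a := (abs_nonneg b).trans_lt h
  have hr : |b / a| < 1 := by rwa [abs_div, abs_of_pos ha, div_lt_one ha]
  have hlog : Tendsto (fun N : ℕ => log |1 - (b / a) ^ N|) atTop (𝓝 0) := by
    simpa using ((tendsto_pow_atTop_nhds_zero_of_abs_lt_one hr).const_sub 1).abs.log
      (by norm_num)
  have hlim := (hlog.div_atTop tendsto_natCast_atTop_atTop).const_add (log a)
  rw [add_zero] at hlim
  refine hlim.congr' ((eventually_ne_atTop 0).mono fun N hN => ?_)
  have hfac : a ^ N - b ^ N = a ^ N * (1 - (b / a) ^ N) := by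
    rw [mul_sub, mul_one, div_pow, mul_div_cancel₀ _ (pow_ne_zero N ha.ne')]
  have hne : 1 - (b / a) ^ N ≠ 0 := by
    simpa using pow_sub_pow_ne_zero_of_abs_lt hr hN
  show _ = log |a ^ N - b ^ N| / N
  rw [hfac, abs_mul, log_mul (by positivity) (abs_ne_zero.mpr hne), abs_pow, abs_of_pos ha,
    log_pow]
  field_simp

/-- thermodynamic limit of the free energy per atom of the
periodic harmonic chain. Indices of `v : Fin N → ℝ` are taken modulo `N`. -/
theorem stmt_15 (θ WF α₀ α₁ : ℝ) (hθ : 0 < θ) (h : |α₁| < α₀) :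
    Filter.Tendsto (fun N : ℕ =>
        -(θ / N) * Real.log (∫ v : Fin N → ℝ,
            Real.exp (-θ⁻¹ * (N * WF + ∑ j : Fin N,
              (α₀ * v j ^ 2 + α₁ * v j * v ⟨((j : ℕ) + 1) % N, Nat.mod_lt _ j.pos⟩)))))
      Filter.atTop
      (nhds (WF + θ / 2 * Real.log (1 / (Real.pi * θ)) +
        θ / 2 * Real.log ((α₀ + Real.sqrt (α₀ ^ 2 - α₁ ^ 2)) / 2))) := by
  obtain ⟨s, t, hts, rfl, rfl, hs2⟩ := exists_sq_add_sq_eq_of_abs_lt h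
  have hts' : |-t| < s := by rwa [abs_neg]
  have hlim := ((tendsto_log_abs_pow_sub_pow_div hts').const_mul θ).const_add
    (WF + θ / 2 * log (1 / (π * θ)))
  rw [← hs2, log_pow, Nat.cast_ofNat, ← mul_assoc, div_mul_cancel₀ θ two_ne_zero]
  refine hlim.congr' ((eventually_ne_atTop 0).mono fun N hN => ?_)
  have : NeZero N := ⟨hN⟩
  have hsucc (j : Fin N) : (⟨((j : ℕ) + 1) % N, Nat.mod_lt _ j.pos⟩ : Fin N) = j + 1 := by
    ext; simp [Fin.val_add, Nat.add_mod]
  have hQ (v : Fin N → ℝ) :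
      ∑ j, twoPointStencil s t (1 : Fin N) v j ^ 2 = ∑ j : Fin N, ((s ^ 2 + t ^ 2) * v j ^ 2 +
        2 * s * t * v j * v ⟨((j : ℕ) + 1) % N, Nat.mod_lt _ j.pos⟩) := by
    simp only [sum_twoPointStencil_sq, hsucc, mul_assoc]
  rw [← freeEnergy_sum_twoPointStencil_sq hθ (pow_sub_pow_ne_zero_of_abs_lt hts' hN)]
  simp only [freeEnergy, hQ]
end
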